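/- The direct sum h(x,y) = f(x) + g(y) of cubic Boolean functions f: F₂ⁿ → F₂ and g: F₂ᵐ → F₂ has no affine derivatives if and only if both f and g have no affine derivatives. Equivalently, the fast-point space satisfies FP_h = FP_f × FP_g when deg(f)=deg(g)=3. -/
import Mathlib


/-- First-order derivative of a Boolean function: `D_a f (x) = f (x + a) + f x`. -/
def bderiv {V : Type} [Add V] (f : V → ZMod 2) (a : V) : V → ZMod 2 :=
  fun x => f (x + a) + f x

/-- The algebraic degree of a Boolean function: the minimal total degree of a polynomial
representing it (this equals the degree of its algebraic normal form). -/
noncomputable def bdeg {σ : Type} (f : (σ → ZMod 2) → ZMod 2) : ℕ :=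
  sInf { d | ∃ p : MvPolynomial σ (ZMod 2),
    (∀ x, MvPolynomial.eval x p = f x) ∧ p.totalDegree = d }

open MvPolynomial

lemma bdeg_le' {σ : Type} (f : (σ → ZMod 2) → ZMod 2) (p : MvPolynomial σ (ZMod 2))
    (hp : ∀ x, MvPolynomial.eval x p = f x) :
    sInf { d | ∃ p : MvPolynomial σ (ZMod 2),
      (∀ x, MvPolynomial.eval x p = f x) ∧ p.totalDegree = d } ≤ p.totalDegree :=
  Nat.sInf_le ⟨p, hp, rfl⟩

lemma exists_rep {σ : Type} [Fintype σ] [DecidableEq σ] (f : (σ → ZMod 2) → ZMod 2) :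
    ∃ p : MvPolynomial σ (ZMod 2), ∀ x, MvPolynomial.eval x p = f x := by
  classical
  refine ⟨∑ c : σ → ZMod 2, C (f c) * ∏ i : σ, (X i + C (c i) + 1), ?_⟩
  intro x
  simp only [map_sum, map_mul, map_prod, map_add, eval_C, eval_X, map_one]
  have key : ∀ c : σ → ZMod 2, (∏ i : σ, (x i + c i + 1)) = if c = x then 1 else 0 := by
    intro c
    by_cases hc : c = x
    · subst hc; rw [if_pos rfl]
      apply Finset.prod_eq_one; intro i _
      have : ∀ u : ZMod 2, u + u + 1 = 1 := by decide
      exact this _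
    · rw [if_neg hc]
      obtain ⟨i, hi⟩ : ∃ i, c i ≠ x i := by
        by_contra hco; push_neg at hco; exact hc (funext hco)
      apply Finset.prod_eq_zero (Finset.mem_univ i)
      have : ∀ u v : ZMod 2, u ≠ v → v + u + 1 = 0 := by decide
      exact this _ _ hi
  simp_rw [key, mul_ite, mul_one, mul_zero]
  simp

lemma exists_min_rep {σ : Type} [Fintype σ] [DecidableEq σ] (f : (σ → ZMod 2) → ZMod 2) :
    ∃ p : MvPolynomial σ (ZMod 2), (∀ x, MvPolynomial.eval x p = f x) ∧
      p.totalDegree = bdeg f := by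
  obtain ⟨p, hp⟩ := exists_rep f
  have : (bdeg f) ∈ { d | ∃ p : MvPolynomial σ (ZMod 2),
      (∀ x, MvPolynomial.eval x p = f x) ∧ p.totalDegree = d } :=
    Nat.sInf_mem ⟨p.totalDegree, p, hp, rfl⟩
  exact this

lemma my_totalDegree_eval₂_le {σ τ : Type} (v : σ → MvPolynomial τ (ZMod 2))
    (hv : ∀ i, (v i).totalDegree ≤ 1) (p : MvPolynomial σ (ZMod 2)) :
    (eval₂ C v p).totalDegree ≤ p.totalDegree := by
  rw [eval₂_eq]
  refine le_trans (totalDegree_finset_sum _ _) ?_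
  apply Finset.sup_le
  intro d hd
  refine le_trans (totalDegree_mul _ _) ?_
  rw [totalDegree_C, zero_add]
  refine le_trans (totalDegree_finset_prod _ _) ?_
  refine le_trans (Finset.sum_le_sum (g := fun i => d i)
    (fun i _ => le_trans (totalDegree_pow (v i) (d i))
      (le_trans (Nat.mul_le_mul_left (d i) (hv i)) (by simp)))) ?_
  exact Finset.le_sup (f := fun s : σ →₀ ℕ => s.sum fun _ e => e) hd

lemma eval_eval₂_elim {α β : Type} (p : MvPolynomial α (ZMod 2))
    (v : α → MvPolynomial β (ZMod 2)) (x : β → ZMod 2) :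
    MvPolynomial.eval x (eval₂ C v p) =
      MvPolynomial.eval (fun s => MvPolynomial.eval x (v s)) p := by
  rw [eval₂_comp_left (eval x) C v p]
  congr 1
  ext r
  simp

lemma bdeg_le {σ : Type} (f : (σ → ZMod 2) → ZMod 2) (p : MvPolynomial σ (ZMod 2))
    (hp : ∀ x, MvPolynomial.eval x p = f x) : bdeg f ≤ p.totalDegree :=
  Nat.sInf_le ⟨p, hp, rfl⟩

lemma bdeg_comp_le {σ τ : Type} [Fintype σ] [DecidableEq σ]
    (F : (σ → ZMod 2) → ZMod 2) (j : σ → τ) :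
    bdeg (fun z : τ → ZMod 2 => F (z ∘ j)) ≤ bdeg F := by
  obtain ⟨p, hp, hd⟩ := exists_min_rep F
  refine le_trans (bdeg_le _ (rename j p) ?_) ?_
  · intro z; rw [eval_rename]; exact hp _
  · rw [← hd]; exact totalDegree_rename_le j p

lemma bdeg_restrictl {σ τ : Type} [Fintype σ] [Fintype τ] [DecidableEq σ] [DecidableEq τ]
    (H : ((σ ⊕ τ) → ZMod 2) → ZMod 2) (y0 : τ → ZMod 2) :
    bdeg (fun x : σ → ZMod 2 => H (Sum.elim x y0)) ≤ bdeg H := by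
  obtain ⟨p, hp, hd⟩ := exists_min_rep H
  set v : σ ⊕ τ → MvPolynomial σ (ZMod 2) := Sum.elim X (fun j => C (y0 j)) with hv
  refine le_trans (bdeg_le _ (eval₂ C v p) ?_) ?_
  · intro x
    rw [eval_eval₂_elim]
    have : (fun s => MvPolynomial.eval x (v s)) = Sum.elim x y0 := by
      funext s; cases s <;> simp [hv]
    rw [this]; exact hp _
  · rw [← hd]
    apply my_totalDegree_eval₂_le
    rintro (i | j) <;> simp [hv, totalDegree_X, totalDegree_C]

lemma bdeg_restrictr {σ τ : Type} [Fintype σ] [Fintype τ] [DecidableEq σ] [DecidableEq τ]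
    (H : ((σ ⊕ τ) → ZMod 2) → ZMod 2) (x0 : σ → ZMod 2) :
    bdeg (fun y : τ → ZMod 2 => H (Sum.elim x0 y)) ≤ bdeg H := by
  obtain ⟨p, hp, hd⟩ := exists_min_rep H
  set v : σ ⊕ τ → MvPolynomial τ (ZMod 2) := Sum.elim (fun i => C (x0 i)) X with hv
  refine le_trans (bdeg_le _ (eval₂ C v p) ?_) ?_
  · intro y
    rw [eval_eval₂_elim]
    have : (fun s => MvPolynomial.eval y (v s)) = Sum.elim x0 y := by
      funext s; cases s <;> simp [hv]
    rw [this]; exact hp _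
  · rw [← hd]
    apply my_totalDegree_eval₂_le
    rintro (i | j) <;> simp [hv, totalDegree_X, totalDegree_C]

lemma bdeg_add_le {σ : Type} [Fintype σ] [DecidableEq σ] (F G : (σ → ZMod 2) → ZMod 2) :
    bdeg (fun x => F x + G x) ≤ max (bdeg F) (bdeg G) := by
  obtain ⟨p, hp, hpd⟩ := exists_min_rep F
  obtain ⟨q, hq, hqd⟩ := exists_min_rep G
  refine le_trans (bdeg_le _ (p + q) ?_) ?_
  · intro x; simp [hp, hq]
  · rw [← hpd, ← hqd]; exact totalDegree_add p q

lemma bdeg_zero {σ : Type} : bdeg (fun _ : σ → ZMod 2 => (0 : ZMod 2)) = 0 :=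
  Nat.le_zero.mp (le_trans (bdeg_le _ 0 (by simp)) (by simp))

lemma bdeg_add_const_le {σ : Type} [Fintype σ] [DecidableEq σ]
    (F : (σ → ZMod 2) → ZMod 2) (c : ZMod 2) :
    bdeg (fun x => F x + c) ≤ bdeg F := by
  obtain ⟨p, hp, hpd⟩ := exists_min_rep F
  refine le_trans (bdeg_le _ (p + C c) ?_) ?_
  · intro x; simp [hp]
  · rw [← hpd]
    exact le_trans (totalDegree_add p (C c)) (by simp [totalDegree_C])

lemma bdeg_add_const {σ : Type} [Fintype σ] [DecidableEq σ]
    (F : (σ → ZMod 2) → ZMod 2) (c : ZMod 2) :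
    bdeg (fun x => F x + c) = bdeg F := by
  refine le_antisymm (bdeg_add_const_le F c) ?_
  have := bdeg_add_const_le (fun x => F x + c) c
  have h2 : (fun x => (F x + c) + c) = F := by
    funext x
    have : c + c = 0 := by
      have : ∀ u : ZMod 2, u + u = 0 := by decide
      exact this c
    rw [add_assoc, this, add_zero]
  rwa [h2] at this

lemma bdeg_directSum {σ τ : Type} [Fintype σ] [Fintype τ] [DecidableEq σ] [DecidableEq τ]
    (F : (σ → ZMod 2) → ZMod 2) (G : (τ → ZMod 2) → ZMod 2) :
    bdeg (fun z : (σ ⊕ τ) → ZMod 2 => F (z ∘ Sum.inl) + G (z ∘ Sum.inr))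
      = max (bdeg F) (bdeg G) := by
  apply le_antisymm
  · refine le_trans (bdeg_add_le (fun z : (σ ⊕ τ) → ZMod 2 => F (z ∘ Sum.inl))
      (fun z => G (z ∘ Sum.inr))) ?_
    exact max_le_max (bdeg_comp_le F Sum.inl) (bdeg_comp_le G Sum.inr)
  · apply max_le
    · have h1 := bdeg_restrictl (fun z : (σ ⊕ τ) → ZMod 2 =>
        F (z ∘ Sum.inl) + G (z ∘ Sum.inr)) (0 : τ → ZMod 2)
      have he : (fun x : σ → ZMod 2 => F (Sum.elim x (0 : τ → ZMod 2) ∘ Sum.inl) + G (Sum.elim x (0 : τ → ZMod 2) ∘ Sum.inr))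
          = fun x => F x + G 0 := by
        funext x; simp
      rw [he] at h1
      calc bdeg F = bdeg (fun x => F x + G 0) := (bdeg_add_const F (G 0)).symm
        _ ≤ _ := h1
    · have h1 := bdeg_restrictr (fun z : (σ ⊕ τ) → ZMod 2 =>
        F (z ∘ Sum.inl) + G (z ∘ Sum.inr)) (0 : σ → ZMod 2)
      have he : (fun y : τ → ZMod 2 => F (Sum.elim (0 : σ → ZMod 2) y ∘ Sum.inl) + G (Sum.elim (0 : σ → ZMod 2) y ∘ Sum.inr))
          = fun y => G y + F 0 := by
        funext y; simp [add_comm]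
      rw [he] at h1
      calc bdeg G = bdeg (fun y => G y + F 0) := (bdeg_add_const G (F 0)).symm
        _ ≤ _ := h1

lemma bderiv_zero {σ : Type} (f : (σ → ZMod 2) → ZMod 2) :
    bderiv f 0 = fun _ => 0 := by
  funext x
  have : ∀ u : ZMod 2, u + u = 0 := by decide
  simp [bderiv, this]

lemma bdeg_bderiv_zero {σ : Type} (f : (σ → ZMod 2) → ZMod 2) :
    bdeg (bderiv f 0) = 0 := by rw [bderiv_zero]; exact bdeg_zero

lemma bderiv_decomp {σ τ : Type}
    (f : (σ → ZMod 2) → ZMod 2) (g : (τ → ZMod 2) → ZMod 2)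
    (h : ((σ ⊕ τ) → ZMod 2) → ZMod 2)
    (hh : ∀ z : (σ ⊕ τ) → ZMod 2, h z = f (z ∘ Sum.inl) + g (z ∘ Sum.inr))
    (c : (σ ⊕ τ) → ZMod 2) :
    bderiv h c = fun z => (bderiv f (c ∘ Sum.inl)) (z ∘ Sum.inl)
      + (bderiv g (c ∘ Sum.inr)) (z ∘ Sum.inr) := by
  funext z
  have e1 : (z + c) ∘ Sum.inl = z ∘ Sum.inl + c ∘ Sum.inl := rfl
  have e2 : (z + c) ∘ Sum.inr = z ∘ Sum.inr + c ∘ Sum.inr := rfl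
  simp only [bderiv, hh, e1, e2]
  ring

lemma bdeg_bderiv_max {σ τ : Type} [Fintype σ] [Fintype τ] [DecidableEq σ] [DecidableEq τ]
    (f : (σ → ZMod 2) → ZMod 2) (g : (τ → ZMod 2) → ZMod 2)
    (h : ((σ ⊕ τ) → ZMod 2) → ZMod 2)
    (hh : ∀ z : (σ ⊕ τ) → ZMod 2, h z = f (z ∘ Sum.inl) + g (z ∘ Sum.inr))
    (c : (σ ⊕ τ) → ZMod 2) :
    bdeg (bderiv h c)
      = max (bdeg (bderiv f (c ∘ Sum.inl))) (bdeg (bderiv g (c ∘ Sum.inr))) := by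
  rw [bderiv_decomp f g h hh c]
  exact bdeg_directSum _ _

lemma sum_fun_eq_zero_iff {σ τ : Type} (c : (σ ⊕ τ) → ZMod 2) :
    c = 0 ↔ (c ∘ Sum.inl = 0 ∧ c ∘ Sum.inr = 0) := by
  constructor
  · rintro rfl; exact ⟨rfl, rfl⟩
  · rintro ⟨h1, h2⟩
    funext s
    cases s with
    | inl i => exact congrFun h1 i
    | inr j => exact congrFun h2 j

/-- The direct sum `h` of cubic functions `f` and `g` has no affine derivatives iff both `f`
and `g` have no affine derivatives; equivalently `FP_h = FP_f × FP_g`. -/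
theorem stmt19 {n m : ℕ} (f : (Fin n → ZMod 2) → ZMod 2) (g : (Fin m → ZMod 2) → ZMod 2)
    (h : ((Fin n ⊕ Fin m) → ZMod 2) → ZMod 2)
    (hh : ∀ z : (Fin n ⊕ Fin m) → ZMod 2, h z = f (z ∘ Sum.inl) + g (z ∘ Sum.inr))
    (hf3 : bdeg f = 3) (hg3 : bdeg g = 3) :
    ((∀ c : (Fin n ⊕ Fin m) → ZMod 2, c ≠ 0 → bdeg (bderiv h c) = 2)
        ↔ ((∀ a : Fin n → ZMod 2, a ≠ 0 → bdeg (bderiv f a) = 2)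
          ∧ (∀ b : Fin m → ZMod 2, b ≠ 0 → bdeg (bderiv g b) = 2)))
    ∧ {c : (Fin n ⊕ Fin m) → ZMod 2 | c = 0 ∨ bdeg (bderiv h c) < 2}
        = {c : (Fin n ⊕ Fin m) → ZMod 2 |
            (c ∘ Sum.inl = 0 ∨ bdeg (bderiv f (c ∘ Sum.inl)) < 2)
            ∧ (c ∘ Sum.inr = 0 ∨ bdeg (bderiv g (c ∘ Sum.inr)) < 2)} := by
  have key : ∀ c : (Fin n ⊕ Fin m) → ZMod 2, bdeg (bderiv h c)
      = max (bdeg (bderiv f (c ∘ Sum.inl))) (bdeg (bderiv g (c ∘ Sum.inr))) :=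
    bdeg_bderiv_max f g h hh
  constructor
  · constructor
    · intro H
      constructor
      · intro a ha
        set c : (Fin n ⊕ Fin m) → ZMod 2 := Sum.elim a 0 with hc
        have hcl : c ∘ Sum.inl = a := rfl
        have hcr : c ∘ Sum.inr = 0 := rfl
        have hcne : c ≠ 0 := fun h0 => ha (by rw [← hcl, h0]; rfl)
        have h2 := H c hcne
        rw [key, hcl, hcr, bdeg_bderiv_zero] at h2
        simpa using h2
      · intro b hb
        set c : (Fin n ⊕ Fin m) → ZMod 2 := Sum.elim 0 b with hc
        have hcl : c ∘ Sum.inl = 0 := rfl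
        have hcr : c ∘ Sum.inr = b := rfl
        have hcne : c ≠ 0 := fun h0 => hb (by rw [← hcr, h0]; rfl)
        have h2 := H c hcne
        rw [key, hcl, hcr, bdeg_bderiv_zero] at h2
        simpa using h2
    · rintro ⟨Hf, Hg⟩ c hc
      rw [key]
      by_cases ha : c ∘ Sum.inl = 0
      · have hb : c ∘ Sum.inr ≠ 0 := by
          intro hb0; exact hc ((sum_fun_eq_zero_iff c).2 ⟨ha, hb0⟩)
        rw [ha, bdeg_bderiv_zero, Hg _ hb]; simp
      · by_cases hb : c ∘ Sum.inr = 0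
        · rw [hb, bdeg_bderiv_zero, Hf _ ha]; simp
        · rw [Hf _ ha, Hg _ hb]; simp
  · ext c
    simp only [Set.mem_setOf_eq]
    rw [key]
    constructor
    · rintro (rfl | hlt)
      · exact ⟨Or.inl rfl, Or.inl rfl⟩
      · exact ⟨Or.inr (lt_of_le_of_lt (le_max_left _ _) hlt),
          Or.inr (lt_of_le_of_lt (le_max_right _ _) hlt)⟩
    · rintro ⟨h1, h2⟩
      refine Or.inr (max_lt ?_ ?_)
      · rcases h1 with h1 | h1
        · rw [h1, bdeg_bderiv_zero]; norm_num
        · exact h1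
      · rcases h2 with h2 | h2
        · rw [h2, bdeg_bderiv_zero]; norm_num
        · exact h2
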